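/- arXiv:2003.14342 — 4 statements merged into one kernel-verified Lean document; each statement's English description precedes it below -/
import Mathlib

section
/- Every fusible number strictly less than 1 is of the form 1 - 2^(-n) for some natural number n, and conversely all such numbers are fusible. -/
/-- The set of fusible numbers. -/
inductive Fusible : ℝ → Prop
  | zero : Fusible 0
  | fuse (x y : ℝ) : Fusible x → Fusible y → |y - x| < 1 → Fusible ((x + y + 1) / 2)

lemma fusible_nonneg {z : ℝ} (h : Fusible z) : 0 ≤ z := by
  induction h with
  | zero => exact le_refl 0
  | fuse x y hx hy hxy ihx ihy => linarith

lemma fusible_form {z : ℝ} (h : Fusible z) : z < 1 → ∃ n : ℕ, z = 1 - 1 / 2 ^ n := by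
  induction h with
  | zero => exact fun _ => ⟨0, by norm_num⟩
  | fuse x y hx hy hxy ihx ihy =>
    intro hlt
    have hx0 := fusible_nonneg hx
    have hy0 := fusible_nonneg hy
    have hx1 : x < 1 := by linarith
    have hy1 : y < 1 := by linarith
    obtain ⟨n, rfl⟩ := ihx hx1
    obtain ⟨m, rfl⟩ := ihy hy1
    have hnm : n = 0 ∨ m = 0 := by
      by_contra hc
      push_neg at hc
      have h1 : (1:ℝ) / 2 ^ n ≤ 1 / 2 := by
        apply div_le_div_of_nonneg_left (by norm_num) (by norm_num)
        calc (2:ℝ) = 2^1 := by norm_num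
        _ ≤ 2 ^ n := by
          apply pow_le_pow_right₀ (by norm_num) (Nat.one_le_iff_ne_zero.mpr hc.1)
      have h2 : (1:ℝ) / 2 ^ m ≤ 1 / 2 := by
        apply div_le_div_of_nonneg_left (by norm_num) (by norm_num)
        calc (2:ℝ) = 2^1 := by norm_num
        _ ≤ 2 ^ m := by
          apply pow_le_pow_right₀ (by norm_num) (Nat.one_le_iff_ne_zero.mpr hc.2)
      linarith
    rcases hnm with rfl | rfl
    · exact ⟨m + 1, by rw [pow_succ]; ring⟩
    · exact ⟨n + 1, by rw [pow_succ]; ring⟩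

lemma fusible_step (k : ℕ) (ihh : Fusible (1 - 1 / 2 ^ k)) : Fusible (1 - 1 / 2 ^ (k + 1)) := by
  have hk : (0:ℝ) < 1 / 2 ^ k := by positivity
  have h2k : (1:ℝ) ≤ 2 ^ k := one_le_pow₀ (by norm_num)
  have hkle : (1:ℝ) / 2 ^ k ≤ 1 := by
    rw [div_le_one (by positivity)]; exact h2k
  have hf := Fusible.fuse 0 (1 - 1 / 2 ^ k) Fusible.zero ihh (by
    rw [abs_of_nonneg (by linarith)]; linarith)
  have he : ((0:ℝ) + (1 - 1 / 2 ^ k) + 1) / 2 = 1 - 1 / 2 ^ (k + 1) := by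
    rw [pow_succ, eq_sub_iff_add_eq]
    field_simp
    ring
  rwa [he] at hf

theorem fusible_lt_one (z : ℝ) :
    (Fusible z ∧ z < 1) ↔ ∃ n : ℕ, z = 1 - 1 / 2 ^ n := by
  constructor
  · rintro ⟨h, hlt⟩
    exact fusible_form h hlt
  · rintro ⟨n, rfl⟩
    have hpos : (0:ℝ) < 1 / 2 ^ n := by positivity
    refine ⟨?_, by linarith⟩
    clear hpos
    induction n with
    | zero => simpa using Fusible.zero
    | succ k ih => exact fusible_step k ih
end

section
/- If T is a representation of a fusible number z with height n > 0, then z - 2^(-n) is a fusible number, and it has a representation of height at least n - 1 as well as a representation of height at most n. -/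
/-- Full binary trees, used as representations of fusible numbers. -/
inductive RepTree where
  | leaf : RepTree
  | node (l r : RepTree) : RepTree

/-- The value of a representation: leaves are `0`, internal nodes fuse their children. -/
noncomputable def RepTree.val : RepTree → ℝ
  | .leaf => 0
  | .node l r => (l.val + r.val + 1) / 2

/-- Validity of a representation: at every internal node, the children differ by less than 1. -/
def RepTree.Valid : RepTree → Prop
  | .leaf => True
  | .node l r => l.Valid ∧ r.Valid ∧ |r.val - l.val| < 1

/-- The height of a representation: length of the longest root-to-leaf path. -/
def RepTree.height : RepTree → ℕ
  | .leaf => 0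
  | .node l r => max l.height r.height + 1

/-- `IsExp r n` means that the dyadic rational `r` has exponent `n`, i.e. `n` is the least
natural number such that `r = p / 2 ^ n` for an integer `p` (so that `p` is odd when `n ≥ 1`). -/
def IsExp (r : ℝ) (n : ℕ) : Prop :=
  (∃ p : ℤ, r = (p : ℝ) / 2 ^ n) ∧ ∀ m : ℕ, m < n → ¬ ∃ p : ℤ, r = (p : ℝ) / 2 ^ m

/- ### Auxiliary lemmas -/

lemma fusible_of_valid : ∀ T : RepTree, T.Valid → Fusible T.val := by
  intro T
  induction T with
  | leaf => intro _; exact Fusible.zero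
  | node l r ihl ihr =>
    intro h
    obtain ⟨h1, h2, h3⟩ := h
    exact Fusible.fuse _ _ (ihl h1) (ihr h2) h3

lemma height_eq_zero {T : RepTree} (h : T.height = 0) : T = .leaf := by
  cases T with
  | leaf => rfl
  | node l r => simp [RepTree.height] at h

lemma dyadic : ∀ (T : RepTree) (m : ℕ), T.height ≤ m → ∃ p : ℤ, T.val = (p : ℝ) / 2 ^ m := by
  intro T
  induction T with
  | leaf => intro m _; exact ⟨0, by simp [RepTree.val]⟩
  | node l r ihl ihr =>
    intro m hm
    have hm' : max l.height r.height + 1 ≤ m := hm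
    obtain ⟨m', rfl⟩ : ∃ m'', m = m'' + 1 := ⟨m - 1, by omega⟩
    obtain ⟨p, hp⟩ := ihl m' (by omega)
    obtain ⟨q, hq⟩ := ihr m' (by omega)
    refine ⟨p + q + 2 ^ m', ?_⟩
    show (l.val + r.val + 1) / 2 = _
    rw [hp, hq]
    have h2 : (2:ℝ) ^ m' ≠ 0 := by positivity
    push_cast
    rw [pow_succ]
    field_simp

/-- A chain of fuses of `B` with increasing values `B.val + 1 - 2^{-k}`. -/
def chainT (B : RepTree) : ℕ → RepTree
  | 0 => B
  | k + 1 => .node B (chainT B k)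

lemma chainT_spec (B : RepTree) (hB : B.Valid) :
    ∀ k, (chainT B k).Valid ∧ (chainT B k).val = B.val + 1 - 1 / 2 ^ k ∧
      B.height ≤ (chainT B k).height := by
  intro k
  induction k with
  | zero => exact ⟨hB, by simp [chainT], le_refl _⟩
  | succ k ih =>
    obtain ⟨h1, h2, h3⟩ := ih
    have h0 : (0:ℝ) < 1 / 2 ^ k := by positivity
    have h1' : (1:ℝ) / 2 ^ k ≤ 1 := by
      rw [div_le_one (by positivity)]
      exact_mod_cast Nat.one_le_two_pow
    refine ⟨⟨hB, h1, ?_⟩, ?_, ?_⟩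
    · rw [h2, abs_lt]
      constructor <;> linarith
    · show (B.val + (chainT B k).val + 1) / 2 = _
      rw [h2, pow_succ]
      field_simp
      ring
    · show B.height ≤ max B.height (chainT B k).height + 1
      have := le_max_left B.height (chainT B k).height
      omega

/-- The conclusion of the main theorem, packaged. -/
def Concl (z : ℝ) (n : ℕ) : Prop :=
  Fusible (z - 1 / 2 ^ n) ∧
    (∃ T₁ : RepTree, T₁.Valid ∧ T₁.val = z - 1 / 2 ^ n ∧ n - 1 ≤ T₁.height) ∧
    (∃ T₂ : RepTree, T₂.Valid ∧ T₂.val = z - 1 / 2 ^ n ∧ T₂.height ≤ n)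

lemma core (n : ℕ)
    (IH : ∀ m, m < n → 0 < m → ∀ S : RepTree, S.Valid → S.height = m → Concl S.val m)
    (A B : RepTree) (hA : A.Valid) (hB : B.Valid) (hd : |B.val - A.val| < 1)
    (hab : A.height ≤ B.height) (hn : B.height + 1 = n) :
    Concl ((A.val + B.val + 1) / 2) n := by
  obtain ⟨hd1, hd2⟩ := abs_lt.mp hd
  rcases Nat.eq_zero_or_pos B.height with hb | hb
  · -- base case : both children are leaves, n = 1
    have hBl : B = .leaf := height_eq_zero hb
    have hAl : A = .leaf := height_eq_zero (by omega)
    subst hBl hAl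
    have hn1 : n = 1 := by omega
    subst hn1
    have hv : (RepTree.leaf.val + RepTree.leaf.val + 1) / 2 - 1 / 2 ^ (1:ℕ) = 0 := by
      norm_num [RepTree.val]
    simp only [Concl]
    rw [hv]
    exact ⟨Fusible.zero,
      ⟨.leaf, trivial, rfl, by simp [RepTree.height]⟩,
      ⟨.leaf, trivial, rfl, by simp [RepTree.height]⟩⟩
  · have hpow : (2:ℝ) ^ n = 2 ^ B.height * 2 := by rw [← hn, pow_succ]
    have h2bpos : (0:ℝ) < 2 ^ B.height := by positivity
    have hεpos : (0:ℝ) < 1 / 2 ^ B.height := by positivity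
    have hεle : (1:ℝ) / 2 ^ B.height ≤ 1 / 2 := by
      apply one_div_le_one_div_of_le (by norm_num)
      calc (2:ℝ) = 2 ^ 1 := (pow_one 2).symm
        _ ≤ 2 ^ B.height := pow_le_pow_right₀ (by norm_num) hb
    by_cases hcase : A.val - B.val < 1 - 1 / 2 ^ B.height
    · -- decrement the B child
      obtain ⟨hf, ⟨B₁, hB₁v, hB₁val, hB₁h⟩, ⟨B₂, hB₂v, hB₂val, hB₂h⟩⟩ :=
        IH B.height (by omega) hb B hB rfl
      have habs : ∀ C : RepTree, C.val = B.val - 1 / 2 ^ B.height → |C.val - A.val| < 1 := by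
        intro C hC
        rw [hC, abs_lt]
        constructor <;> linarith
      have hval : ∀ C : RepTree, C.val = B.val - 1 / 2 ^ B.height →
          (RepTree.node A C).val = (A.val + B.val + 1) / 2 - 1 / 2 ^ n := by
        intro C hC
        show (A.val + C.val + 1) / 2 = _
        rw [hC, hpow]
        field_simp
        ring
      refine ⟨?_, ⟨.node A B₁, ⟨hA, hB₁v, habs B₁ hB₁val⟩, hval B₁ hB₁val, ?_⟩,
        ⟨.node A B₂, ⟨hA, hB₂v, habs B₂ hB₂val⟩, hval B₂ hB₂val, ?_⟩⟩
      · rw [← hval B₂ hB₂val]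
        exact fusible_of_valid _ ⟨hA, hB₂v, habs B₂ hB₂val⟩
      · show n - 1 ≤ max A.height B₁.height + 1
        have := le_max_right A.height B₁.height
        omega
      · show max A.height B₂.height + 1 ≤ n
        have : max A.height B₂.height ≤ B.height := max_le (by omega) hB₂h
        omega
    · push_neg at hcase
      by_cases haeq : A.height = B.height
      · -- decrement the A child
        obtain ⟨hf, ⟨A₁, hA₁v, hA₁val, hA₁h⟩, ⟨A₂, hA₂v, hA₂val, hA₂h⟩⟩ :=
          IH B.height (by omega) hb A hA haeq
        have habs : ∀ C : RepTree, C.val = A.val - 1 / 2 ^ B.height → |B.val - C.val| < 1 := by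
          intro C hC
          rw [hC, abs_lt]
          constructor <;> linarith
        have hval : ∀ C : RepTree, C.val = A.val - 1 / 2 ^ B.height →
            (RepTree.node C B).val = (A.val + B.val + 1) / 2 - 1 / 2 ^ n := by
          intro C hC
          show (C.val + B.val + 1) / 2 = _
          rw [hC, hpow]
          field_simp
          ring
        refine ⟨?_, ⟨.node A₁ B, ⟨hA₁v, hB, habs A₁ hA₁val⟩, hval A₁ hA₁val, ?_⟩,
          ⟨.node A₂ B, ⟨hA₂v, hB, habs A₂ hA₂val⟩, hval A₂ hA₂val, ?_⟩⟩
        · rw [← hval A₂ hA₂val]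
          exact fusible_of_valid _ ⟨hA₂v, hB, habs A₂ hA₂val⟩
        · show n - 1 ≤ max A₁.height B.height + 1
          have := le_max_right A₁.height B.height
          omega
        · show max A₂.height B.height + 1 ≤ n
          have : max A₂.height B.height ≤ B.height := max_le (by omega) le_rfl
          omega
      · -- A is strictly shallower; integrality forces A.val - B.val = 1 - 2^{-b}
        have halt : A.height < B.height := lt_of_le_of_ne hab haeq
        obtain ⟨P, hP⟩ := dyadic A (B.height - 1) (by omega)
        obtain ⟨Q, hQ⟩ := dyadic B B.height le_rfl
        have h2 : (2:ℝ) ^ B.height = 2 ^ (B.height - 1) * 2 := by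
          rw [← pow_succ]
          congr 1
          omega
        have h2b1 : (0:ℝ) < 2 ^ (B.height - 1) := by positivity
        have hk : A.val - B.val = ((2 * P - Q : ℤ) : ℝ) / 2 ^ B.height := by
          rw [hP, hQ, h2]
          push_cast
          field_simp
        have hub : A.val - B.val < 1 := by linarith
        have hk1 : ((2 ^ B.height - 1 : ℤ) : ℝ) ≤ ((2 * P - Q : ℤ) : ℝ) := by
          have h1 : (1 - 1 / 2 ^ B.height) * 2 ^ B.height ≤ ((2 * P - Q : ℤ) : ℝ) := by
            rw [← le_div_iff₀ h2bpos, ← hk]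
            exact hcase
          have h2' : (1 - 1 / (2:ℝ) ^ B.height) * 2 ^ B.height = 2 ^ B.height - 1 := by
            field_simp
          push_cast at h1 ⊢
          linarith
        have hk2 : ((2 * P - Q : ℤ) : ℝ) < ((2 ^ B.height : ℤ) : ℝ) := by
          have : ((2 * P - Q : ℤ) : ℝ) / 2 ^ B.height < 1 := by rw [← hk]; exact hub
          rw [div_lt_one h2bpos] at this
          push_cast at this ⊢
          linarith
        have hkz : (2 * P - Q : ℤ) = 2 ^ B.height - 1 := by
          have e1 : (2 ^ B.height - 1 : ℤ) ≤ 2 * P - Q := by exact_mod_cast hk1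
          have e2 : (2 * P - Q : ℤ) < 2 ^ B.height := by exact_mod_cast hk2
          omega
        have hxy : A.val - B.val = 1 - 1 / 2 ^ B.height := by
          rw [hk, hkz]
          push_cast
          field_simp
        have hεn : (1:ℝ) / 2 ^ n = (1 / 2 ^ B.height) / 2 := by
          rw [hpow]
          ring
        have hz : (A.val + B.val + 1) / 2 - 1 / 2 ^ n = A.val := by
          rw [hεn]
          linarith
        obtain ⟨hcv, hcval, hch⟩ := chainT_spec B hB B.height
        refine ⟨?_, ⟨chainT B B.height, hcv, ?_, ?_⟩, ⟨A, hA, hz.symm, by omega⟩⟩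
        · rw [hz]
          exact fusible_of_valid A hA
        · rw [hz, hcval]
          linarith
        · omega

lemma key : ∀ n : ℕ, 0 < n → ∀ T : RepTree, T.Valid → T.height = n → Concl T.val n := by
  intro n
  induction n using Nat.strong_induction_on with
  | _ n IH =>
    intro hpos T hT hn
    cases T with
    | leaf =>
      have : (0:ℕ) = n := hn
      omega
    | node l r =>
      obtain ⟨hl, hr, hd⟩ := hT
      have hh : max l.height r.height + 1 = n := hn
      rcases le_total l.height r.height with h | h
      · have hn' : r.height + 1 = n := by rw [max_eq_right h] at hh; exact hh
        exact core n (fun m hm hm0 S hS hSm => IH m hm hm0 S hS hSm) l r hl hr hd h hn'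
      · have hn' : l.height + 1 = n := by rw [max_eq_left h] at hh; exact hh
        have hd' : |l.val - r.val| < 1 := by rw [abs_sub_comm]; exact hd
        have hc := core n (fun m hm hm0 S hS hSm => IH m hm hm0 S hS hSm) r l hr hl hd' h hn'
        have e : (r.val + l.val + 1) / 2 = (l.val + r.val + 1) / 2 := by ring
        rw [e] at hc
        exact hc

theorem fusible_backward (T : RepTree) (hT : T.Valid) (n : ℕ) (hn : T.height = n)
    (hpos : 0 < n) :
    Fusible (T.val - 1 / 2 ^ n) ∧
    (∃ T₁ : RepTree, T₁.Valid ∧ T₁.val = T.val - 1 / 2 ^ n ∧ n - 1 ≤ T₁.height) ∧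
    (∃ T₂ : RepTree, T₂.Valid ∧ T₂.val = T.val - 1 / 2 ^ n ∧ T₂.height ≤ n) :=
  key n hpos T hT hn
end

section
/- If z is a fusible number whose maximum representation height h_max(z) strictly exceeds its exponent e(z), then z is a limit point of the fusible numbers from below (z is not the successor of any fusible number). -/
/-- `HMaxIs z n` means that the maximum height over all representations of `z` is `n`. -/
def HMaxIs (z : ℝ) (n : ℕ) : Prop :=
  (∃ T : RepTree, T.Valid ∧ T.val = z ∧ T.height = n) ∧
  ∀ T : RepTree, T.Valid → T.val = z → T.height ≤ n

/-- `z` is a limit fusible number: it is the supremum of the smaller fusible numbers. -/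
def IsLimitFusible (z : ℝ) : Prop :=
  IsLUB {w : ℝ | Fusible w ∧ w < z} z

/-!
Call `x` a dyadic limit if `x - 2⁻ʲ` is fusible for all large `j`; a dyadic limit is a limit
fusible number. The number `1` is a dyadic limit, and fusing a fusible `o` with a dyadic limit `c`,
where `c - o ≤ 1` and `o - c < 1`, gives a dyadic limit again.

Key claim: if `h_max(x) = e(x) = b ≥ 1`, then `x - 2⁻ᵇ` is fusible and `x + 2⁻ᵇ` is a dyadic
limit. Write `x = (u + v + 1) / 2` with children of distinct exponents (equal ones would lower
`e(x)`); the child `v` of larger exponent satisfies the claim at level `b - 1`, and as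
`u, v ∈ 2^(1-b) ℤ` we have `|v - u| ≤ 1 - 2^(1-b)`, which is the room needed to fuse `u` with
`v ∓ 2^(1-b)`.

The theorem follows by induction on `h_max(z)`, splitting a representation of maximal height as
`z = (l + r + 1) / 2`. If a child has a representation higher than its exponent, it is a dyadic
limit by induction, hence so is `z`. Otherwise `h_max = e` for both children; distinct exponents
would force `e(z) = h_max(z)`, and a common exponent `b ≥ 1` (with `l ≤ r`) gives
`z = ((r - 2⁻ᵇ) + (l + 2⁻ᵇ) + 1) / 2`, a fusion of a fusible number with a dyadic limit.
-/

open Filter Topology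

def IsDyadic (b : ℕ) (x : ℝ) : Prop := ∃ p : ℤ, x = p / 2 ^ b

namespace IsDyadic

variable {a b : ℕ} {x y : ℝ}

theorem mono (hx : IsDyadic a x) (hab : a ≤ b) : IsDyadic b x := by
  obtain ⟨p, rfl⟩ := hx
  refine ⟨p * 2 ^ (b - a), ?_⟩
  rw [← Nat.add_sub_cancel' hab, pow_add]
  push_cast
  field_simp
  rw [Nat.add_sub_cancel_left]

theorem sub (hx : IsDyadic b x) (hy : IsDyadic b y) : IsDyadic b (x - y) := by
  obtain ⟨p, rfl⟩ := hx
  obtain ⟨q, rfl⟩ := hy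
  exact ⟨p - q, by push_cast; ring⟩

theorem fuse (hx : IsDyadic b x) (hy : IsDyadic b y) : IsDyadic (b + 1) ((x + y + 1) / 2) := by
  obtain ⟨p, rfl⟩ := hx
  obtain ⟨q, rfl⟩ := hy
  exact ⟨p + q + 2 ^ b, by push_cast; field_simp; ring⟩

theorem abs_le_one_sub (hx : IsDyadic b x) (h : |x| < 1) : |x| ≤ 1 - (1 / 2) ^ b := by
  obtain ⟨p, rfl⟩ := hx
  have h2 : (0 : ℝ) < 2 ^ b := by positivity
  rw [abs_div, abs_of_pos h2, div_lt_one h2] at h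
  have hp : |p| + 1 ≤ (2 : ℤ) ^ b := by exact_mod_cast h
  have hp' : |(p : ℝ)| + 1 ≤ 2 ^ b := by exact_mod_cast hp
  rw [abs_div, abs_of_pos h2, div_le_iff₀ h2, sub_mul, div_pow, one_pow,
    one_div_mul_cancel h2.ne']
  linarith

end IsDyadic

theorem RepTree.isDyadic_val (T : RepTree) : IsDyadic T.height T.val := by
  induction T with
  | leaf => exact ⟨0, by simp [RepTree.val]⟩
  | node L R ihL ihR =>
    exact (ihL.mono (le_max_left _ _)).fuse (ihR.mono (le_max_right _ _))

namespace IsExp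

variable {x : ℝ} {k m : ℕ}

theorem isDyadic (he : IsExp x m) : IsDyadic m x := he.1

theorem le (he : IsExp x m) (hx : IsDyadic k x) : m ≤ k :=
  not_lt.1 fun hk => he.2 k hk hx

theorem eq (he : IsExp x m) (he' : IsExp x k) : m = k :=
  le_antisymm (he.le he'.isDyadic) (he'.le he.isDyadic)

theorem le_height {T : RepTree} (he : IsExp x m) (hT : T.val = x) : m ≤ T.height :=
  he.le (hT ▸ T.isDyadic_val)

end IsExp

theorem IsDyadic.exists_isExp {x : ℝ} {k : ℕ} (hx : IsDyadic k x) : ∃ m, IsExp x m := by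
  classical
  have h : ∃ k, IsDyadic k x := ⟨k, hx⟩
  exact ⟨Nat.find h, Nat.find_spec h, fun m hm => Nat.find_min h hm⟩

theorem isExp_succ_iff {x : ℝ} {b : ℕ} :
    IsExp x (b + 1) ↔ ∃ p : ℤ, x = (2 * p + 1) / 2 ^ (b + 1) := by
  constructor
  · rintro ⟨⟨p, rfl⟩, hmin⟩
    obtain ⟨t, rfl | rfl⟩ := Int.even_or_odd' p
    · exact absurd ⟨t, by push_cast; rw [pow_succ]; field_simp⟩ (hmin b b.lt_succ_self)
    · exact ⟨t, by push_cast; rfl⟩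
  · rintro ⟨p, rfl⟩
    refine ⟨⟨2 * p + 1, by push_cast; rfl⟩, fun m hm ⟨q, hq⟩ => ?_⟩
    obtain ⟨d, rfl⟩ : ∃ d, b = m + d := ⟨b - m, by omega⟩
    have h : (2 * p + 1 : ℝ) = 2 * (q * 2 ^ d) := by
      rw [div_eq_div_iff (by positivity) (by positivity)] at hq
      rw [show m + d + 1 = m + (d + 1) by ring, pow_add, pow_succ] at hq
      have : (0 : ℝ) < 2 ^ m := by positivity
      nlinarith
    have h' : 2 * p + 1 = 2 * (q * 2 ^ d) := by exact_mod_cast h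
    omega

theorem IsExp.fuse_of_lt {u v : ℝ} {a c : ℕ} (hu : IsExp u a) (hv : IsExp v c) (hac : a < c) :
    IsExp ((u + v + 1) / 2) (c + 1) := by
  obtain ⟨b, rfl⟩ : ∃ b, c = b + 1 := ⟨c - 1, by omega⟩
  obtain ⟨q, rfl⟩ := isExp_succ_iff.1 hv
  obtain ⟨p, rfl⟩ := hu.isDyadic.mono (Nat.le_of_lt_succ hac)
  exact isExp_succ_iff.2 ⟨p + q + 2 ^ b, by push_cast; field_simp; ring⟩

theorem IsExp.isDyadic_fuse {u v : ℝ} {b : ℕ} (hu : IsExp u (b + 1)) (hv : IsExp v (b + 1)) :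
    IsDyadic (b + 1) ((u + v + 1) / 2) := by
  obtain ⟨p, rfl⟩ := isExp_succ_iff.1 hu
  obtain ⟨q, rfl⟩ := isExp_succ_iff.1 hv
  exact ⟨p + q + 1 + 2 ^ b, by push_cast; field_simp; ring⟩

def IsDyadicLimitFusible (x : ℝ) : Prop := ∀ᶠ j : ℕ in atTop, Fusible (x - (1 / 2) ^ j)

theorem isDyadicLimitFusible_one : IsDyadicLimitFusible 1 := by
  refine Eventually.of_forall fun j => ?_
  induction j with
  | zero => simpa using Fusible.zero
  | succ j ih =>
    have hj : (1 / 2 : ℝ) ^ j ≤ 1 := pow_le_one₀ (by norm_num) (by norm_num)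
    have h := Fusible.fuse _ _ ih Fusible.zero
      (by rw [abs_lt]; constructor <;> linarith [pow_pos (by norm_num : (0 : ℝ) < 1 / 2) j])
    convert h using 1
    ring

theorem IsDyadicLimitFusible.fuse {o c : ℝ} (ho : Fusible o) (hc : IsDyadicLimitFusible c)
    (h₁ : c - o ≤ 1) (h₂ : o - c < 1) : IsDyadicLimitFusible ((o + c + 1) / 2) := by
  have hsmall : ∀ᶠ j : ℕ in atTop, (1 / 2 : ℝ) ^ j < 1 - (o - c) :=
    (tendsto_pow_atTop_nhds_zero_of_lt_one (by norm_num) (by norm_num)).eventually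
      (gt_mem_nhds (by linarith))
  have hshift : ∀ᶠ j : ℕ in atTop, Fusible ((o + c + 1) / 2 - (1 / 2) ^ (j + 1)) := by
    filter_upwards [hc, hsmall] with j hcj hj
    have h := Fusible.fuse _ _ ho hcj
      (by rw [abs_lt]; constructor <;> linarith [pow_pos (by norm_num : (0 : ℝ) < 1 / 2) j])
    convert h using 1
    ring
  exact tendsto_principal.1 ((tendsto_add_atTop_iff_nat 1).1 (tendsto_principal.2 hshift))

theorem IsDyadicLimitFusible.isLimitFusible {z : ℝ} (hz : IsDyadicLimitFusible z) :
    IsLimitFusible z := by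
  refine ⟨fun w hw => hw.2.le, fun b hb => ?_⟩
  have hlim : Tendsto (fun j : ℕ => z - (1 / 2) ^ j) atTop (𝓝 z) := by
    simpa using tendsto_const_nhds.sub
      (tendsto_pow_atTop_nhds_zero_of_lt_one (by norm_num : (0 : ℝ) ≤ 1 / 2) (by norm_num))
  refine le_of_tendsto hlim (hz.mono fun j hj => hb ⟨hj, ?_⟩)
  linarith [pow_pos (by norm_num : (0 : ℝ) < 1 / 2) j]

theorem RepTree.fusible_val {T : RepTree} (hT : T.Valid) : Fusible T.val := by
  induction T with
  | leaf => exact Fusible.zero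
  | node L R ihL ihR => exact Fusible.fuse _ _ (ihL hT.1) (ihR hT.2.1) hT.2.2

theorem RepTree.eq_leaf_of_height_eq_zero {T : RepTree} (hT : T.height = 0) : T = .leaf := by
  cases T with
  | leaf => rfl
  | node L R => simp [RepTree.height] at hT

/-- `h_max(z) ≤ n`. -/
def HMaxLe (z : ℝ) (n : ℕ) : Prop :=
  ∀ T : RepTree, T.Valid → T.val = z → T.height ≤ n

namespace HMaxLe

variable {L R : RepTree} {N : ℕ}

theorem of_node_left (h : HMaxLe (RepTree.node L R).val (N + 1)) (hT : (RepTree.node L R).Valid) :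
    HMaxLe L.val N := by
  intro C hC hCL
  have := h (.node C R) ⟨hC, hT.2.1, hCL ▸ hT.2.2⟩ (by simp only [RepTree.val, hCL])
  simp only [RepTree.height] at this
  omega

theorem of_node_right (h : HMaxLe (RepTree.node L R).val (N + 1)) (hT : (RepTree.node L R).Valid) :
    HMaxLe R.val N := by
  intro C hC hCR
  have := h (.node L C) ⟨hT.1, hC, hCR ▸ hT.2.2⟩ (by simp only [RepTree.val, hCR])
  simp only [RepTree.height] at this
  omega

theorem hMaxIs {x : ℝ} {T : RepTree} (h : HMaxLe x N) (he : IsExp x N) (hT : T.Valid)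
    (hTx : T.val = x) : HMaxIs x N :=
  ⟨⟨T, hT, hTx, le_antisymm (h T hT hTx) (he.le_height hTx)⟩, h⟩

end HMaxLe

theorem HMaxIs.hMaxLe {x : ℝ} {n : ℕ} (h : HMaxIs x n) : HMaxLe x n := h.2

def HasDyadicNeighbours (b : ℕ) (x : ℝ) : Prop :=
  Fusible (x - (1 / 2) ^ b) ∧ IsDyadicLimitFusible (x + (1 / 2) ^ b)

theorem fusible_fuse_sub_half {o c δ : ℝ} (ho : Fusible o) (hc : Fusible (c - δ))
    (h₁ : c - o < 1 + δ) (h₂ : o - c ≤ 1 - δ) : Fusible ((o + c + 1) / 2 - δ / 2) := by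
  by_cases h : o - (c - δ) < 1
  · convert Fusible.fuse _ _ ho hc (by rw [abs_lt]; constructor <;> linarith) using 1
    ring
  · -- then `o - c = 1 - δ`, and the number in question is `o` itself
    convert ho using 1
    linarith

theorem HasDyadicNeighbours.fuse {u v : ℝ} {b : ℕ} (hv : HasDyadicNeighbours b v)
    (hu : Fusible u) (hud : IsDyadic b u) (hvd : IsDyadic b v) (huv : |v - u| < 1) :
    HasDyadicNeighbours (b + 1) ((u + v + 1) / 2) := by
  have hgap := abs_le.1 ((hvd.sub hud).abs_le_one_sub huv)
  have hδ : (0 : ℝ) < (1 / 2) ^ b := by positivity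
  have hhalf : (1 / 2 : ℝ) ^ (b + 1) = (1 / 2) ^ b / 2 := by ring
  constructor
  · rw [hhalf]
    exact fusible_fuse_sub_half hu hv.1 (by linarith) (by linarith)
  · convert hv.2.fuse hu (by linarith) (by linarith) using 1
    ring

theorem hasDyadicNeighbours_of_hMaxIs {b : ℕ} (hb : 1 ≤ b) {x : ℝ} (hmax : HMaxIs x b)
    (he : IsExp x b) : HasDyadicNeighbours b x := by
  induction b, hb using Nat.le_induction generalizing x with
  | base =>
    obtain ⟨T, -, rfl, hT⟩ := hmax.1
    obtain ⟨L, R, rfl⟩ : ∃ L R, T = .node L R := by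
      cases T with
      | leaf => simp [RepTree.height] at hT
      | node L R => exact ⟨L, R, rfl⟩
    simp only [RepTree.height, Nat.add_eq_right, Nat.max_eq_zero_iff] at hT
    rw [RepTree.eq_leaf_of_height_eq_zero hT.1, RepTree.eq_leaf_of_height_eq_zero hT.2]
    norm_num [HasDyadicNeighbours, RepTree.val]
    exact ⟨Fusible.zero, isDyadicLimitFusible_one⟩
  | succ b hb ih =>
    obtain ⟨T, hT, rfl, hTh⟩ := hmax.1
    cases T with
    | leaf => simp [RepTree.height] at hTh
    | node U V =>
    have hU := hmax.hMaxLe.of_node_left hT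
    have hV := hmax.hMaxLe.of_node_right hT
    obtain ⟨eu, heu⟩ := U.isDyadic_val.exists_isExp
    obtain ⟨ev, hev⟩ := V.isDyadic_val.exists_isExp
    rcases lt_trichotomy eu ev with h | rfl | h
    · obtain rfl : ev = b := Nat.succ_injective ((heu.fuse_of_lt hev h).eq he)
      exact (ih (hV.hMaxIs hev hT.2.1 rfl) hev).fuse (U.fusible_val hT.1) (heu.isDyadic.mono h.le)
        hev.isDyadic hT.2.2
    · -- two children of equal exponent fuse to a number of exponent at most `max eu 1 ≤ b`
      have hx : IsDyadic b (RepTree.node U V).val := by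
        cases eu with
        | zero => exact (heu.isDyadic.fuse hev.isDyadic).mono hb
        | succ d => exact (heu.isDyadic_fuse hev).mono ((heu.le_height rfl).trans (hU U hT.1 rfl))
      exact absurd (he.le hx) (by omega)
    · obtain rfl : eu = b := by
        refine Nat.succ_injective ((hev.fuse_of_lt heu h).eq ?_)
        rwa [add_comm V.val]
      have := (ih (hU.hMaxIs heu hT.1 rfl) heu).fuse (V.fusible_val hT.2.1) (hev.isDyadic.mono h.le)
        heu.isDyadic (by rw [abs_sub_comm]; exact hT.2.2)
      rwa [add_comm V.val] at this

theorem HasDyadicNeighbours.isDyadicLimitFusible_fuse {l r : ℝ} {b : ℕ} (hb : 1 ≤ b)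
    (hl : HasDyadicNeighbours b l) (hr : HasDyadicNeighbours b r) (hlr : l ≤ r)
    (hrl : r - l < 1) :
    IsDyadicLimitFusible ((l + r + 1) / 2) := by
  have hδ : (1 / 2 : ℝ) ^ b ≤ 1 / 2 := pow_le_of_le_one (by norm_num) (by norm_num) (by omega)
  have hδ₀ : (0 : ℝ) < (1 / 2) ^ b := by positivity
  convert hl.2.fuse hr.1 (by linarith) (by linarith) using 1
  ring

theorem isDyadicLimitFusible_fuse_of_hMaxIs {l r : ℝ} {a b m : ℕ} (hl : HMaxIs l a)
    (hla : IsExp l a) (hr : HMaxIs r b) (hrb : IsExp r b) (hlr : |r - l| < 1)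
    (he : IsExp ((l + r + 1) / 2) m) (hm : m ≤ max a b) :
    IsDyadicLimitFusible ((l + r + 1) / 2) := by
  rcases lt_trichotomy a b with h | rfl | h
  · exact absurd ((hla.fuse_of_lt hrb h).eq he) (by omega)
  · cases a with
    | zero =>
      obtain ⟨L, -, rfl, hL⟩ := hl.1
      obtain ⟨R, -, rfl, hR⟩ := hr.1
      rw [RepTree.eq_leaf_of_height_eq_zero hL, RepTree.eq_leaf_of_height_eq_zero hR] at he
      have hhalf : IsExp ((RepTree.leaf.val + RepTree.leaf.val + 1) / 2) 1 :=
        isExp_succ_iff.2 ⟨0, by norm_num [RepTree.val]⟩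
      exact absurd (hhalf.eq he) (by omega)
    | succ d =>
      have hl' := hasDyadicNeighbours_of_hMaxIs (by omega) hl hla
      have hr' := hasDyadicNeighbours_of_hMaxIs (by omega) hr hrb
      obtain ⟨hrl, hlr⟩ := abs_sub_lt_iff.1 hlr
      rcases le_total l r with h | h
      · exact hl'.isDyadicLimitFusible_fuse (by omega) hr' h hrl
      · rw [add_comm l]
        exact hr'.isDyadicLimitFusible_fuse (by omega) hl' h hlr
  · rw [add_comm l] at he ⊢
    exact absurd ((hrb.fuse_of_lt hla h).eq he) (by omega)

theorem isDyadicLimitFusible_of_hMaxLe {n m : ℕ} {z : ℝ} (hn : HMaxLe z n) (he : IsExp z m)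
    {T : RepTree} (hT : T.Valid) (hTz : T.val = z) (hm : m < T.height) :
    IsDyadicLimitFusible z := by
  induction n generalizing z m T with
  | zero => exact absurd (hn T hT hTz) (by omega)
  | succ N ih =>
    subst hTz
    cases T with
    | leaf => simp [RepTree.height] at hm
    | node L R =>
    obtain ⟨el, hel⟩ := L.isDyadic_val.exists_isExp
    obtain ⟨er, her⟩ := R.isDyadic_val.exists_isExp
    obtain ⟨hRL, hLR⟩ := abs_sub_lt_iff.1 hT.2.2
    by_cases hL : HMaxLe L.val el
    swap
    · simp only [HMaxLe, not_forall, not_le] at hL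
      obtain ⟨C, hC, hCL, hlt⟩ := hL
      have := (ih (hn.of_node_left hT) hel hC hCL hlt).fuse (R.fusible_val hT.2.1) hLR.le hRL
      rwa [add_comm R.val] at this
    by_cases hR : HMaxLe R.val er
    swap
    · simp only [HMaxLe, not_forall, not_le] at hR
      obtain ⟨C, hC, hCR, hlt⟩ := hR
      exact (ih (hn.of_node_right hT) her hC hCR hlt).fuse (L.fusible_val hT.1) hRL.le hLR
    have hLh := hL L hT.1 rfl
    have hRh := hR R hT.2.1 rfl
    simp only [RepTree.height] at hm
    exact isDyadicLimitFusible_fuse_of_hMaxIs (hL.hMaxIs hel hT.1 rfl) hel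
      (hR.hMaxIs her hT.2.1 rfl) her hT.2.2 he (by omega)

theorem limit_of_hmax_gt_exp_general (z : ℝ) (n m : ℕ)
    (hmax : HMaxIs z n) (he : IsExp z m) (h : m < n) :
    IsLimitFusible z := by
  obtain ⟨⟨T, hT, hTz, rfl⟩, hn⟩ := hmax
  exact (isDyadicLimitFusible_of_hMaxLe hn he hT hTz h).isLimitFusible

theorem limit_of_hmax_gt_exp (z : ℝ) (n m : ℕ) (hz : Fusible z)
    (hmax : HMaxIs z n) (he : IsExp z m) (h : m < n) :
    IsLimitFusible z :=
  limit_of_hmax_gt_exp_general z n m hmax he h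
end

section
/- If z is a fusible number with maximum representation height n, then the smallest fusible number greater than z is z + 2^(-(n+1)), and its maximum representation height is n + 1. -/
/-!
A representation of height `m` has its value in `2⁻ᵐℤ`. By induction on the tree, modifying the
taller child, one can add `2⁻⁽ᵐ⁺¹⁾` to the value (the height becomes `m + 1`) and subtract `2⁻ᵐ`
(the height stays at least `m - 1`); adding to a tallest representation of `z` gives the candidate
`z + 2⁻⁽ⁿ⁺¹⁾`. If `w` were the least fusible number in `(z, z + 2⁻⁽ⁿ⁺¹⁾)`, then by granularity a
representation of `w` would have height `m ≥ n + 2` and `w - 2⁻ᵐ ≥ z`; but `w - 2⁻ᵐ` is fusible with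
a representation taller than `n`, so it lies strictly between `z` and `w`. The same subtraction
bounds the heights of representations of `z + 2⁻⁽ⁿ⁺¹⁾` by `n + 1`.

The least element exists because fusible numbers accumulate nowhere from above: at the least such
accumulation point `L`, the smaller summands `x` of fusible numbers `z ↓ L` converge, along a
subsequence, to some `X ≤ L - 1/2`; either they approach `X` from above, or the larger summands
`2z - 1 - x` approach `2L - 1 - X < L` from above.
-/

namespace Fusible

theorem nonneg {z : ℝ} (hz : Fusible z) : 0 ≤ z := by
  induction hz with
  | zero => exact le_rfl
  | fuse x y _ _ _ hx hy => linarith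

theorem exists_fuse_of_ne_zero {z : ℝ} (hz : Fusible z) (h0 : z ≠ 0) :
    ∃ x y, Fusible x ∧ Fusible y ∧ x ≤ y ∧ y < x + 1 ∧ z = (x + y + 1) / 2 := by
  cases hz with
  | zero => exact absurd rfl h0
  | fuse x y hx hy hxy =>
    rcases le_total x y with h | h
    · exact ⟨x, y, hx, hy, h, by linarith [(abs_lt.1 hxy).2], rfl⟩
    · exact ⟨y, x, hy, hx, h, by linarith [(abs_lt.1 hxy).1], by ring⟩

theorem exists_rep {z : ℝ} (hz : Fusible z) : ∃ T : RepTree, T.Valid ∧ T.val = z := by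
  induction hz with
  | zero => exact ⟨.leaf, trivial, rfl⟩
  | fuse x y _ _ hxy hx hy =>
    obtain ⟨X, hX, rfl⟩ := hx
    obtain ⟨Y, hY, rfl⟩ := hy
    exact ⟨.node X Y, ⟨hX, hY, hxy⟩, rfl⟩

end Fusible

noncomputable def dyadics (n : ℕ) : AddSubgroup ℝ := AddSubgroup.zmultiples (2 ^ n)⁻¹

theorem dyadics_mono : Monotone dyadics := by
  intro n m hnm
  refine AddSubgroup.zmultiples_le.2 (AddSubgroup.mem_zmultiples_iff.2 ⟨2 ^ (m - n), ?_⟩)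
  rw [zsmul_eq_mul, Int.cast_pow, Int.cast_ofNat, pow_sub₀ _ two_ne_zero hnm]
  field_simp

theorem one_mem_dyadics (n : ℕ) : (1 : ℝ) ∈ dyadics n :=
  AddSubgroup.mem_zmultiples_iff.2 ⟨2 ^ n, by simp⟩

theorem fuse_mem_dyadics {n : ℕ} {x y : ℝ} (hx : x ∈ dyadics n) (hy : y ∈ dyadics n) :
    (x + y + 1) / 2 ∈ dyadics (n + 1) := by
  obtain ⟨k, hk⟩ := AddSubgroup.mem_zmultiples_iff.1
    (add_mem (add_mem hx hy) (one_mem_dyadics n))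
  refine AddSubgroup.mem_zmultiples_iff.2 ⟨k, ?_⟩
  rw [← hk, zsmul_eq_mul, zsmul_eq_mul, pow_succ]
  ring

theorem add_inv_two_pow_le_of_mem_dyadics {n : ℕ} {x y : ℝ} (hx : x ∈ dyadics n)
    (hy : y ∈ dyadics n) (hxy : x < y) : x + (2 ^ n)⁻¹ ≤ y := by
  obtain ⟨k, hk⟩ := AddSubgroup.mem_zmultiples_iff.1 (sub_mem hy hx)
  rw [zsmul_eq_mul] at hk
  have hpos : (0 : ℝ) < (2 ^ n)⁻¹ := by positivity
  have hk0 : (0 : ℝ) < k := pos_of_mul_pos_left (hk ▸ sub_pos.2 hxy) hpos.le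
  have hk1 : (1 : ℝ) ≤ k := Int.cast_one_le_of_pos (Int.cast_pos.1 hk0)
  nlinarith

namespace RepTree

theorem Valid.fusible_val {T : RepTree} (hT : T.Valid) : Fusible T.val := by
  induction T with
  | leaf => exact .zero
  | node L R ihL ihR => exact .fuse _ _ (ihL hT.1) (ihR hT.2.1) hT.2.2

theorem val_node_comm (L R : RepTree) : (node L R).val = (node R L).val := by
  simp only [val]; ring

theorem height_node_comm (L R : RepTree) : (node L R).height = (node R L).height := by
  simp only [height, max_comm]

theorem Valid.node_comm {L R : RepTree} (h : (node L R).Valid) : (node R L).Valid :=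
  ⟨h.2.1, h.1, by rw [abs_sub_comm]; exact h.2.2⟩

theorem eq_leaf_of_height_eq_zero_s12 {T : RepTree} (h : T.height = 0) : T = leaf := by
  cases T with
  | leaf => rfl
  | node L R => simp [height] at h

theorem val_mem_dyadics (T : RepTree) : T.val ∈ dyadics T.height := by
  induction T with
  | leaf => exact zero_mem _
  | node L R ihL ihR =>
    exact fuse_mem_dyadics (dyadics_mono (le_max_left _ _) ihL)
      (dyadics_mono (le_max_right _ _) ihR)

theorem Valid.exists_val_add_one {T : RepTree} (hT : T.Valid) :
    ∃ T' : RepTree, T'.Valid ∧ T'.val = T.val + 1 ∧ T'.height = T.height + 2 := by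
  have hTT : (node T T).Valid := ⟨hT, hT, by simp⟩
  refine ⟨node (node T T) (node T T), ⟨hTT, hTT, by simp⟩, ?_, ?_⟩
  · simp only [val]; ring
  · simp [height]

theorem exists_val_add_of_node {L R : RepTree} (hv : (node L R).Valid)
    (hRL : R.height ≤ L.height)
    (ihL : ∃ L' : RepTree, L'.Valid ∧ L'.val = L.val + (2 ^ (L.height + 1))⁻¹ ∧
      L'.height = L.height + 1) :
    ∃ T' : RepTree, T'.Valid ∧ T'.val = (node L R).val + (2 ^ ((node L R).height + 1))⁻¹ ∧
      T'.height = (node L R).height + 1 := by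
  obtain ⟨hL, hR, hLR⟩ := hv
  obtain ⟨L', hL', hL'val, hL'h⟩ := ihL
  have hmax : (node L R).height = L.height + 1 := by simp [height, hRL]
  have hR' := dyadics_mono hRL R.val_mem_dyadics
  have hgap : L.val - R.val + (2 ^ L.height)⁻¹ ≤ 1 :=
    add_inv_two_pow_le_of_mem_dyadics (sub_mem L.val_mem_dyadics hR') (one_mem_dyadics _)
      (by linarith [(abs_lt.1 hLR).1])
  have hδ : ((2 : ℝ) ^ L.height)⁻¹ = 2 * (2 ^ (L.height + 1))⁻¹ := by ring
  have hδ' : ((2 : ℝ) ^ (L.height + 1 + 1))⁻¹ = (2 ^ (L.height + 1))⁻¹ / 2 := by ring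
  have hpos : (0 : ℝ) < (2 ^ (L.height + 1))⁻¹ := by positivity
  refine ⟨node L' R, ⟨hL', hR, abs_lt.2 ⟨?_, ?_⟩⟩, ?_, ?_⟩
  · linarith
  · linarith [(abs_lt.1 hLR).2]
  · simp only [val, hL'val, hmax, hδ']; ring
  · simp [height, hL'h]; omega

theorem Valid.exists_val_add {T : RepTree} (hT : T.Valid) :
    ∃ T' : RepTree, T'.Valid ∧ T'.val = T.val + (2 ^ (T.height + 1))⁻¹ ∧
      T'.height = T.height + 1 := by
  induction T with
  | leaf =>
    exact ⟨node leaf leaf, ⟨trivial, trivial, by simp⟩, by norm_num [val, height], rfl⟩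
  | node L R ihL ihR =>
    rcases le_total R.height L.height with h | h
    · exact exists_val_add_of_node hT h (ihL hT.1)
    · rw [val_node_comm, height_node_comm]
      exact exists_val_add_of_node hT.node_comm h (ihR hT.2.1)

theorem exists_val_sub_of_node {L R : RepTree} (hv : (node L R).Valid)
    (hRL : R.height ≤ L.height)
    (ihL : L.height ≠ 0 → ∃ L' : RepTree, L'.Valid ∧ L'.val = L.val - (2 ^ L.height)⁻¹ ∧
      L.height ≤ L'.height + 1) :
    ∃ T' : RepTree, T'.Valid ∧ T'.val = (node L R).val - (2 ^ (node L R).height)⁻¹ ∧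
      (node L R).height ≤ T'.height + 1 := by
  obtain ⟨hL, hR, hLR⟩ := hv
  have hmax : (node L R).height = L.height + 1 := by simp [height, hRL]
  rw [hmax]
  rcases Nat.eq_zero_or_pos L.height with h0 | h0
  · rw [eq_leaf_of_height_eq_zero_s12 h0, eq_leaf_of_height_eq_zero_s12 (by omega : R.height = 0)]
    exact ⟨leaf, trivial, by norm_num [val, height], by simp [height]⟩
  obtain ⟨L', hL', hL'val, hL'h⟩ := ihL h0.ne'
  have hR' := dyadics_mono hRL R.val_mem_dyadics
  have hgap : R.val - L.val + (2 ^ L.height)⁻¹ ≤ 1 :=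
    add_inv_two_pow_le_of_mem_dyadics (sub_mem hR' L.val_mem_dyadics) (one_mem_dyadics _)
      (abs_lt.1 hLR).2
  have hδ : ((2 : ℝ) ^ L.height)⁻¹ = 2 * (2 ^ (L.height + 1))⁻¹ := by ring
  have hpos : (0 : ℝ) < (2 ^ (L.height + 1))⁻¹ := by positivity
  rcases hgap.lt_or_eq with hlt | heq
  · refine ⟨node L' R, ⟨hL', hR, abs_lt.2 ⟨?_, ?_⟩⟩, ?_, ?_⟩
    · linarith [(abs_lt.1 hLR).1]
    · linarith
    · simp only [val, hL'val]; linarith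
    · simp only [height]; omega
  · -- `R` is then `L' + 1`, which has a tall representation.
    obtain ⟨T', hT', hT'val, hT'h⟩ := hL'.exists_val_add_one
    refine ⟨T', hT', ?_, by omega⟩
    simp only [val, hT'val, hL'val]; linarith

theorem Valid.exists_val_sub {T : RepTree} (hT : T.Valid) (h0 : T.height ≠ 0) :
    ∃ T' : RepTree, T'.Valid ∧ T'.val = T.val - (2 ^ T.height)⁻¹ ∧
      T.height ≤ T'.height + 1 := by
  induction T with
  | leaf => exact absurd rfl h0
  | node L R ihL ihR =>
    rcases le_total R.height L.height with h | h
    · exact exists_val_sub_of_node hT h (ihL hT.1)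
    · rw [val_node_comm, height_node_comm]
      exact exists_val_sub_of_node hT.node_comm h (ihR hT.2.1)

theorem Valid.height_le_of_forall_fusible_le {z : ℝ} {n : ℕ}
    (hgap : ∀ w, Fusible w → z < w → z + (2 ^ (n + 1))⁻¹ ≤ w) {V : RepTree} (hV : V.Valid)
    (hVval : V.val = z + (2 ^ (n + 1))⁻¹) : V.height ≤ n + 1 := by
  by_contra! h
  obtain ⟨U, hU, hUval, -⟩ := hV.exists_val_sub (by omega)
  have hlt := inv_pow_lt_inv_pow_of_lt (one_lt_two : (1 : ℝ) < 2) h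
  have := hgap U.val hU.fusible_val (by linarith)
  have : (0 : ℝ) < (2 ^ V.height)⁻¹ := by positivity
  linarith

end RepTree

open Filter Topology

def FusibleAccAbove (L : ℝ) : Prop :=
  ∀ ε > 0, ∃ w, Fusible w ∧ L < w ∧ w < L + ε

theorem FusibleAccAbove.nonneg {L : ℝ} (h : FusibleAccAbove L) : 0 ≤ L := by
  by_contra! hL
  obtain ⟨w, hw, -, hwL⟩ := h (-L) (by linarith)
  linarith [hw.nonneg]

theorem fusibleAccAbove_of_tendsto {u : ℕ → ℝ} {X : ℝ} (hu : ∀ i, Fusible (u i))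
    (hlim : Tendsto u atTop (𝓝 X)) (hfreq : ∃ᶠ i in atTop, X < u i) : FusibleAccAbove X := by
  intro ε hε
  obtain ⟨i, hXu, huX⟩ :=
    (hfreq.and_eventually (hlim.eventually (gt_mem_nhds (lt_add_of_pos_right X hε)))).exists
  exact ⟨u i, hu i, hXu, huX⟩

theorem FusibleAccAbove.exists_lt {L : ℝ} (h : FusibleAccAbove L) :
    ∃ L' < L, FusibleAccAbove L' := by
  choose z hz hLz hzL using fun i : ℕ => h (1 / (i + 1)) Nat.one_div_pos_of_nat
  have hzlim : Tendsto z atTop (𝓝 L) := by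
    refine tendsto_of_tendsto_of_tendsto_of_le_of_le tendsto_const_nhds ?_
      (fun i => (hLz i).le) (fun i => (hzL i).le)
    simpa using tendsto_const_nhds.add (tendsto_one_div_add_atTop_nhds_zero_nat (𝕜 := ℝ))
  choose x y hx hy hxy hyx hzxy using fun i =>
    (hz i).exists_fuse_of_ne_zero (h.nonneg.trans_lt (hLz i)).ne'
  have hxz : ∀ i, x i + 1 / 2 ≤ z i := fun i => by linarith [hzxy i, hxy i]
  have hzx : ∀ i, z i < x i + 1 := fun i => by linarith [hzxy i, hyx i]
  have hxIcc : ∀ i, x i ∈ Set.Icc 0 (L + 1) := fun i => by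
    have : 1 / ((i : ℝ) + 1) ≤ 1 :=
      div_le_one_of_le₀ (le_add_of_nonneg_left i.cast_nonneg) (by positivity)
    exact ⟨(hx i).nonneg, by linarith [hxz i, hzL i]⟩
  obtain ⟨X, -, φ, hφ, hxφ⟩ := tendsto_subseq_of_bounded (Metric.isBounded_Icc _ _) hxIcc
  have hzφ : Tendsto (z ∘ φ) atTop (𝓝 L) := hzlim.comp hφ.tendsto_atTop
  by_cases hfreq : ∃ᶠ i in atTop, X < x (φ i)
  · refine ⟨X, ?_, fusibleAccAbove_of_tendsto (fun i => hx (φ i)) hxφ hfreq⟩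
    have : X ≤ L - 1 / 2 :=
      le_of_tendsto_of_tendsto' hxφ (hzφ.sub_const (1 / 2)) fun i => by
        simp only [Function.comp_apply]; linarith [hxz (φ i)]
    linarith
  · have hev : ∀ᶠ i in atTop, x (φ i) ≤ X :=
      (not_frequently.1 hfreq).mono fun i => le_of_not_gt
    obtain ⟨i, hi⟩ := hev.exists
    refine ⟨2 * L - 1 - X, by linarith [hLz (φ i), hzx (φ i)], ?_⟩
    have hyφ : (fun i => y (φ i)) = fun i => 2 * z (φ i) - 1 - x (φ i) :=
      funext fun i => by linarith [hzxy (φ i)]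
    refine fusibleAccAbove_of_tendsto (fun i => hy (φ i)) ?_ ?_
    · rw [hyφ]
      exact ((hzφ.const_mul 2).sub_const 1).sub hxφ
    · exact (hev.mono fun i hi => by linarith [hLz (φ i), hzxy (φ i)]).frequently

theorem not_fusibleAccAbove (L : ℝ) : ¬ FusibleAccAbove L := by
  intro hL
  set Λ := {M | FusibleAccAbove M}
  have hbdd : BddBelow Λ := ⟨0, fun M hM => hM.nonneg⟩
  have hinf : FusibleAccAbove (sInf Λ) := by
    intro ε hε
    obtain ⟨M, hMΛ, hMε⟩ := exists_lt_of_csInf_lt ⟨L, hL⟩ (by linarith : sInf Λ < sInf Λ + ε / 2)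
    obtain ⟨w, hw, hMw, hwM⟩ := hMΛ (ε / 2) (by linarith)
    exact ⟨w, hw, (csInf_le hbdd hMΛ).trans_lt hMw, by linarith⟩
  obtain ⟨L', hL'lt, hL'⟩ := hinf.exists_lt
  exact (csInf_le hbdd hL').not_gt hL'lt

theorem sInf_mem_of_fusible {S : Set ℝ} (hS : ∀ w ∈ S, Fusible w) (hne : S.Nonempty) :
    sInf S ∈ S := by
  by_contra hmem
  refine not_fusibleAccAbove (sInf S) fun ε hε => ?_
  obtain ⟨w, hwS, hwε⟩ := exists_lt_of_csInf_lt hne (lt_add_of_pos_right (sInf S) hε)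
  have hle : sInf S ≤ w := csInf_le ⟨0, fun w hw => (hS w hw).nonneg⟩ hwS
  exact ⟨w, hS w hwS, hle.lt_of_ne fun h => hmem (h ▸ hwS), hwε⟩

theorem Fusible.add_inv_two_pow_succ_le {z w : ℝ} {n : ℕ} (hz : Fusible z)
    (hn : ∀ T : RepTree, T.Valid → T.val = z → T.height ≤ n) (hw : Fusible w) (hzw : z < w) :
    z + (2 ^ (n + 1))⁻¹ ≤ w := by
  by_contra! hwz
  set S := {w | Fusible w ∧ z < w ∧ w < z + (2 ^ (n + 1))⁻¹}
  have hSF : ∀ w ∈ S, Fusible w := fun w hw => hw.1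
  have hmem := sInf_mem_of_fusible hSF ⟨w, hw, hzw, hwz⟩
  set w₀ := sInf S
  obtain ⟨hw₀, hzw₀, hw₀z⟩ := hmem
  obtain ⟨Z, hZ, rfl⟩ := hz.exists_rep
  obtain ⟨W, hW, hWval⟩ := hw₀.exists_rep
  have hZ' := dyadics_mono (le_max_of_le_right (b := W.height) (hn Z hZ rfl)) Z.val_mem_dyadics
  have hW' := dyadics_mono (le_max_left W.height n) W.val_mem_dyadics
  have hdiff : Z.val + (2 ^ max W.height n)⁻¹ ≤ w₀ :=
    add_inv_two_pow_le_of_mem_dyadics hZ' (hWval ▸ hW') hzw₀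
  have hWn : n + 2 ≤ W.height := by
    by_contra! h
    have := inv_pow_le_inv_pow_of_le (one_le_two : (1 : ℝ) ≤ 2)
      (by omega : max W.height n ≤ n + 1)
    linarith
  rw [max_eq_left (by omega)] at hdiff
  -- `w₀ - 2⁻ʰ` (`h` the height of `W`) lies in `[z, w₀)`, and it is not `z`, all of whose
  -- representations are shorter than its own.
  obtain ⟨T, hT, hTval, hTh⟩ := hW.exists_val_sub (by omega)
  have hTz : T.val ≠ Z.val := fun h => by have := hn T hT h; omega
  have hpos : (0 : ℝ) < (2 ^ W.height)⁻¹ := by positivity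
  have hTS : T.val ∈ S :=
    ⟨hT.fusible_val, (by linarith : Z.val ≤ T.val).lt_of_ne hTz.symm, by linarith⟩
  linarith [csInf_le ⟨0, fun w hw => hw.1.nonneg⟩ hTS]

theorem succ_of_hmax_general (z : ℝ) (n : ℕ) (hmax : HMaxIs z n) :
    IsLeast {w : ℝ | Fusible w ∧ z < w} (z + 1 / 2 ^ (n + 1)) ∧
    HMaxIs (z + 1 / 2 ^ (n + 1)) (n + 1) := by
  obtain ⟨⟨T, hT, rfl, rfl⟩, hle⟩ := hmax
  have hgap : ∀ w, Fusible w → T.val < w → T.val + (2 ^ (T.height + 1))⁻¹ ≤ w :=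
    fun w hw hzw => hT.fusible_val.add_inv_two_pow_succ_le hle hw hzw
  obtain ⟨S, hS, hSval, hSh⟩ := hT.exists_val_add
  rw [one_div, ← hSval]
  refine ⟨⟨⟨hS.fusible_val, ?_⟩, fun w hw => hSval ▸ hgap w hw.1 hw.2⟩, ⟨S, hS, rfl, hSh⟩,
    fun V hV hVval => hV.height_le_of_forall_fusible_le hgap (hVval.trans hSval)⟩
  rw [hSval]
  exact lt_add_of_pos_right _ (by positivity)

theorem succ_of_hmax (z : ℝ) (n : ℕ) (hz : Fusible z) (hmax : HMaxIs z n) :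
    IsLeast {w : ℝ | Fusible w ∧ z < w} (z + 1 / 2 ^ (n + 1)) ∧
    HMaxIs (z + 1 / 2 ^ (n + 1)) (n + 1) :=
  succ_of_hmax_general z n hmax
end
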